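/- arXiv:2311.03549 — 2 statements merged into one kernel-verified Lean document; each statement's English description precedes it below -/
import Mathlib

section
/- Let n ≥ 2, k ≥ 1, let α ∈ [n]^n be complete, and suppose all cars follow the k-Naples parking rule. Then the following are equivalent: (i) α is a k-Naples parking function (α ∈ PF_{n,k}); (ii) for every j ∈ [n], parking spot j is occupied by a car whose preference is at least j (there exists i with ψ_k(c_i) = j and a_i ≥ j); (iii) for every j ∈ [n], ψ_k(c_j) ≤ a_j. -/
open Finset

/-- The spot where a single car parks on a one-way street with spots `1,…,n`:
`occ` is the set of already occupied spots, `p` is the car's preference, and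
`r` is its backward allowance (it follows the `r`-Naples rule).  If spot `p`
is free the car parks there; otherwise it checks spots `p-1, p-2, …, max (p-r) 1`
and parks in the first free one among these; otherwise it parks in the smallest
free spot `> p` (and `≤ n`); `none` means the car fails to park. -/
def parkSpot (n : ℕ) (occ : Finset ℕ) (p r : ℕ) : Option ℕ :=
  if p ∈ occ then
    if hb : ((Finset.Ico (max 1 (p - r)) p).filter (fun j => j ∉ occ)).Nonempty then
      some (((Finset.Ico (max 1 (p - r)) p).filter (fun j => j ∉ occ)).max' hb)
    else if hf : ((Finset.Ioc p n).filter (fun j => j ∉ occ)).Nonempty then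
      some (((Finset.Ioc p n).filter (fun j => j ∉ occ)).min' hf)
    else none
  else some p

/-- The set of occupied spots after the first `i` of the `m` cars (with
preferences `a` and backward allowances `r`) have attempted to park on a
street with `n` spots. -/
def occUpTo (n m : ℕ) (a r : Fin m → ℕ) : ℕ → Finset ℕ
  | 0 => ∅
  | i + 1 =>
    let occ := occUpTo n m a r i
    if h : i < m then
      match parkSpot n occ (a ⟨i, h⟩) (r ⟨i, h⟩) with
      | some s => insert s occ
      | none => occ
    else occ

/-- The outcome map: the spot where car `c_i` parks (`none` if it fails to park),
when the `m` cars with preferences `a` park on `n` spots, car `c_i` following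
the `r i`-Naples rule. -/
def outcome (n m : ℕ) (a r : Fin m → ℕ) (i : Fin m) : Option ℕ :=
  parkSpot n (occUpTo n m a r i.val) (a i) (r i)

/-- The outcome map with values in `ℕ∞`: failure to park is recorded as `∞`. -/
def outcomeE (n m : ℕ) (a r : Fin m → ℕ) (i : Fin m) : ENat :=
  (outcome n m a r i).elim ⊤ (fun s => (s : ENat))

/-- All `m` cars (preferences `a`, car `c_i` following the `r i`-Naples rule)
are able to park on the street with `n` spots.  For `m = n` this says that `r`
is a parking strategy for `a`, i.e. `(a, r) ∈ PR_n`. -/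
def AllPark (n m : ℕ) (a r : Fin m → ℕ) : Prop :=
  ∀ i : Fin m, (outcome n m a r i).isSome

instance (n m : ℕ) (a r : Fin m → ℕ) : Decidable (AllPark n m a r) := by
  unfold AllPark; infer_instance

/-- `a ∈ PF_{n,k}`: `a` is a `k`-Naples parking function of length `n`. -/
def NaplesPF (n k : ℕ) (a : Fin n → ℕ) : Prop :=
  AllPark n n a (fun _ => k)

instance (n k : ℕ) (a : Fin n → ℕ) : Decidable (NaplesPF n k a) := by
  unfold NaplesPF; infer_instance

/-- `a ∈ PF_n`: `a` is a (standard) parking function of length `n`. -/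
def IsPF (n : ℕ) (a : Fin n → ℕ) : Prop := NaplesPF n 0 a

instance (n : ℕ) (a : Fin n → ℕ) : Decidable (IsPF n a) := by
  unfold IsPF; infer_instance

/-- `u_α(j) = Σ_{i=j}^n |α|_i − (n−j+1) = #{i : a_i ≥ j} − (n−j+1)`. -/
def ucount (n : ℕ) (a : Fin n → ℕ) (j : ℕ) : ℤ :=
  ((Finset.univ.filter (fun i : Fin n => j ≤ a i)).card : ℤ) - ((n : ℤ) - (j : ℤ) + 1)

/-- `U_α = {j ∈ [n] : u_α(j) ≥ 1}`. -/
def Uset (n : ℕ) (a : Fin n → ℕ) : Finset ℕ :=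
  (Finset.Icc 1 n).filter (fun j => 1 ≤ ucount n a j)

/-- A parking preference of length `n` is complete if `U_α = {2,…,n}`. -/
def Complete (n : ℕ) (a : Fin n → ℕ) : Prop :=
  Uset n a = Finset.Icc 2 n

instance (n : ℕ) (a : Fin n → ℕ) : Decidable (Complete n a) := by
  unfold Complete; infer_instance

/-- `[p,q]` is a maximal interval of `U_α`. -/
def MaxInterval (n : ℕ) (a : Fin n → ℕ) (p q : ℕ) : Prop :=
  p ≤ q ∧ (∀ j, p ≤ j → j ≤ q → j ∈ Uset n a) ∧ p - 1 ∉ Uset n a ∧ q + 1 ∉ Uset n a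

/-!
A car that drives forward past its preference `a t` to a spot `s` found every spot of
`[max 1 (a t - k), s)` taken. Then every car with preference at least `s` ends up strictly
beyond `s`: one parking later could not go below `s` (it cannot back up further than car `t`
could), and one parking earlier below `s` would have had to find `s` itself occupied. So at
most `n - s` cars prefer a spot `≥ s`, which for `s ≥ 2` contradicts `s ∈ U_α`. Hence in a
complete Naples parking function no car parks forward; conversely, `n` cars on `n` spots all
park exactly when every spot gets filled.
-/

section parkSpot

variable {n : ℕ} {occ : Finset ℕ} {p r s : ℕ}

lemma parkSpot_not_mem (h : parkSpot n occ p r = some s) : s ∉ occ := by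
  unfold parkSpot at h
  split_ifs at h with hp hb hf <;> cases Option.some_inj.mp h
  · exact (mem_filter.mp (max'_mem _ hb)).2
  · exact (mem_filter.mp (min'_mem _ hf)).2
  · exact hp

lemma parkSpot_mem_Icc (hp : p ∈ Icc 1 n) (h : parkSpot n occ p r = some s) :
    s ∈ Icc 1 n := by
  rw [mem_Icc] at hp ⊢
  unfold parkSpot at h
  split_ifs at h with _ hb hf <;> cases Option.some_inj.mp h
  · have hm := mem_Ico.mp (mem_filter.mp (max'_mem _ hb)).1
    exact ⟨(le_max_left 1 (p - r)).trans hm.1, by omega⟩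
  · have hm := mem_Ioc.mp (mem_filter.mp (min'_mem _ hf)).1
    omega
  · exact hp

lemma sub_le_of_parkSpot_eq (h : parkSpot n occ p r = some s) : p - r ≤ s := by
  unfold parkSpot at h
  split_ifs at h with _ hb hf <;> cases Option.some_inj.mp h
  · exact (le_max_right 1 (p - r)).trans (mem_Ico.mp (mem_filter.mp (max'_mem _ hb)).1).1
  · have hm := mem_Ioc.mp (mem_filter.mp (min'_mem _ hf)).1
    omega
  · exact Nat.sub_le p r

lemma mem_of_parkSpot_lt (h : parkSpot n occ p r = some s) (hsp : s < p) {w : ℕ}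
    (hsw : s < w) (hwp : w ≤ p) : w ∈ occ := by
  unfold parkSpot at h
  split_ifs at h with hp hb hf <;> cases Option.some_inj.mp h
  · rcases hwp.eq_or_lt with rfl | hwp
    · exact hp
    by_contra hw
    have hs := mem_Ico.mp (mem_filter.mp (max'_mem _ hb)).1
    have hw' : w ∈ (Ico (max 1 (p - r)) p).filter (· ∉ occ) :=
      mem_filter.mpr ⟨mem_Ico.mpr ⟨hs.1.trans hsw.le, hwp⟩, hw⟩
    have := le_max' _ w hw'
    omega
  · have hm := mem_Ioc.mp (mem_filter.mp (min'_mem _ hf)).1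
    omega
  · omega

lemma mem_of_lt_parkSpot (h : parkSpot n occ p r = some s) (hps : p < s) {w : ℕ}
    (hw1 : 1 ≤ w) (hwr : p - r ≤ w) (hws : w < s) : w ∈ occ := by
  unfold parkSpot at h
  split_ifs at h with hp hb hf <;> cases Option.some_inj.mp h
  · have hm := mem_Ico.mp (mem_filter.mp (max'_mem _ hb)).1
    omega
  · rcases lt_trichotomy w p with hwp | rfl | hpw
    · by_contra hw
      exact hb ⟨w, mem_filter.mpr ⟨mem_Ico.mpr ⟨max_le hw1 hwr, hwp⟩, hw⟩⟩
    · exact hp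
    · by_contra hw
      have hsn := mem_Ioc.mp (mem_filter.mp (min'_mem _ hf)).1
      have hw' : w ∈ (Ioc p n).filter (· ∉ occ) :=
        mem_filter.mpr ⟨mem_Ioc.mpr ⟨hpw, by omega⟩, hw⟩
      have := min'_le _ w hw'
      omega
  · omega

end parkSpot

section occUpTo

variable {n m : ℕ} {a r : Fin m → ℕ}

lemma occUpTo_succ_of_outcome_eq {i : Fin m} {s : ℕ} (h : outcome n m a r i = some s) :
    occUpTo n m a r (i + 1) = insert s (occUpTo n m a r i) := by
  rw [occUpTo, dif_pos i.isLt]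
  unfold outcome at h
  rw [h]

lemma occUpTo_monotone : Monotone (occUpTo n m a r) := by
  refine monotone_nat_of_le_succ fun j => ?_
  conv_rhs => rw [occUpTo]
  split_ifs with hj
  · split
    · exact subset_insert _ _
    · exact subset_rfl
  · exact subset_rfl

lemma outcome_mem_occUpTo {i : Fin m} {s : ℕ} (h : outcome n m a r i = some s) {j : ℕ}
    (hij : (i : ℕ) < j) : s ∈ occUpTo n m a r j :=
  occUpTo_monotone (Nat.succ_le_of_lt hij) (by
    rw [occUpTo_succ_of_outcome_eq h]
    exact mem_insert_self _ _)

lemma outcome_not_mem_occUpTo {i : Fin m} {s : ℕ} (h : outcome n m a r i = some s) :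
    s ∉ occUpTo n m a r i :=
  parkSpot_not_mem h

lemma outcome_inj {i i' : Fin m} {s : ℕ} (h : outcome n m a r i = some s)
    (h' : outcome n m a r i' = some s) : i = i' := by
  by_contra hne
  rcases Fin.lt_or_lt_of_ne hne with hlt | hlt
  · exact outcome_not_mem_occUpTo h' (outcome_mem_occUpTo h hlt)
  · exact outcome_not_mem_occUpTo h (outcome_mem_occUpTo h' hlt)

lemma outcome_get_injective (hall : AllPark n m a r) :
    Function.Injective fun i => (outcome n m a r i).get (hall i) := by
  intro i i' (he : (outcome n m a r i).get _ = (outcome n m a r i').get _)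
  exact outcome_inj (Option.some_get (hall i)).symm (he ▸ (Option.some_get (hall i')).symm)

lemma outcome_mem_Icc (ha : ∀ i, a i ∈ Icc 1 n) {i : Fin m} {s : ℕ}
    (h : outcome n m a r i = some s) : s ∈ Icc 1 n :=
  parkSpot_mem_Icc (ha i) h

lemma outcomeE_le_coe_iff {i : Fin m} {b : ℕ} :
    outcomeE n m a r i ≤ (b : ENat) ↔ ∃ s, outcome n m a r i = some s ∧ s ≤ b := by
  unfold outcomeE
  cases outcome n m a r i <;> simp

end occUpTo

section fullStreet

variable {n : ℕ} {a r : Fin n → ℕ}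

lemma exists_outcome_eq_of_allPark (ha : ∀ i, a i ∈ Icc 1 n) (hall : AllPark n n a r) :
    ∀ j ∈ Icc 1 n, ∃ i, outcome n n a r i = some j := by
  intro j hj
  obtain ⟨i, -, rfl⟩ := surj_on_of_inj_on_of_card_le (s := univ)
    (fun i _ => (outcome n n a r i).get (hall i))
    (fun i _ => outcome_mem_Icc ha (Option.some_get _).symm)
    (fun _ _ _ _ he => outcome_get_injective hall he)
    (by simp) j hj
  exact ⟨i, (Option.some_get _).symm⟩

lemma allPark_of_forall_exists_outcome_eq
    (h : ∀ j ∈ Icc 1 n, ∃ i, outcome n n a r i = some j) : AllPark n n a r := by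
  choose g hg using h
  intro i
  obtain ⟨j, hj, rfl⟩ := surj_on_of_inj_on_of_card_le g (fun _ _ => mem_univ _)
    (fun j j' hj hj' he => Option.some_inj.mp ((hg j hj).symm.trans (he ▸ hg j' hj')))
    (by simp) i (mem_univ i)
  simp [hg j hj]

end fullStreet

section forward

variable {n m k : ℕ} {a : Fin m → ℕ}

lemma lt_outcome_of_outcome_gt_pref (ha : ∀ i, a i ∈ Icc 1 n) {t : Fin m} {s : ℕ}
    (h : outcome n m a (fun _ => k) t = some s) (hts : a t < s) {i : Fin m} (hi : s ≤ a i)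
    {v : ℕ} (hv : outcome n m a (fun _ => k) i = some v) : s < v := by
  have hv1 := (mem_Icc.mp (outcome_mem_Icc ha hv)).1
  have hne : v ≠ s := fun he => by
    cases he
    cases outcome_inj hv h
    omega
  by_contra hvs
  replace hvs : v < s := by omega
  rcases lt_or_ge (t : ℕ) i with hti | hit
  · have hvk : a i - k ≤ v := sub_le_of_parkSpot_eq hv
    have hvt : v ∈ occUpTo n m a (fun _ => k) t :=
      mem_of_lt_parkSpot h hts hv1 (show a t - k ≤ v by omega) hvs
    exact outcome_not_mem_occUpTo hv (occUpTo_monotone hti.le hvt)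
  · have hsi : s ∈ occUpTo n m a (fun _ => k) i :=
      mem_of_parkSpot_lt hv (by omega) hvs hi
    exact outcome_not_mem_occUpTo h (occUpTo_monotone hit hsi)

lemma card_le_of_outcome_gt_pref (ha : ∀ i, a i ∈ Icc 1 n)
    (hall : AllPark n m a (fun _ => k)) {t : Fin m} {s : ℕ}
    (h : outcome n m a (fun _ => k) t = some s) (hts : a t < s) :
    #{i | s ≤ a i} ≤ n - s := by
  rw [← Nat.card_Ioc]
  refine card_le_card_of_injOn (fun i => (outcome n m a (fun _ => k) i).get (hall i))
    (fun i hi => ?_) (outcome_get_injective hall).injOn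
  have hv := (Option.some_get (hall i)).symm
  exact mem_Ioc.mpr ⟨lt_outcome_of_outcome_gt_pref ha h hts (mem_filter.mp hi).2 hv,
    (mem_Icc.mp (outcome_mem_Icc ha hv)).2⟩

lemma outcome_le_pref_of_Icc_subset_Uset {a : Fin n → ℕ} (ha : ∀ i, a i ∈ Icc 1 n)
    (hU : Icc 2 n ⊆ Uset n a) (hall : AllPark n n a (fun _ => k)) {t : Fin n} {s : ℕ}
    (h : outcome n n a (fun _ => k) t = some s) : s ≤ a t := by
  by_contra! hts
  have hcard := card_le_of_outcome_gt_pref ha hall h hts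
  have hs := mem_Icc.mp (outcome_mem_Icc ha h)
  have hsU := hU (mem_Icc.mpr ⟨by have := (mem_Icc.mp (ha t)).1; omega, hs.2⟩)
  rw [Uset, mem_filter, ucount] at hsU
  omega

end forward

theorem statement8_general (n k : ℕ) (a : Fin n → ℕ)
    (ha : ∀ i, a i ∈ Finset.Icc 1 n) (hcomp : Complete n a) :
    List.TFAE
      [NaplesPF n k a,
       ∀ j ∈ Finset.Icc 1 n, ∃ i : Fin n,
         outcome n n a (fun _ => k) i = some j ∧ j ≤ a i,
       ∀ i : Fin n, outcomeE n n a (fun _ => k) i ≤ (a i : ENat)] := by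
  tfae_have 1 → 3 := fun hall i => by
    obtain ⟨s, hs⟩ := Option.isSome_iff_exists.mp (hall i)
    exact outcomeE_le_coe_iff.mpr ⟨s, hs, outcome_le_pref_of_Icc_subset_Uset ha hcomp.ge hall hs⟩
  tfae_have 3 → 2 := by
    intro h3 j hj
    have hall : NaplesPF n k a := fun i => by
      obtain ⟨s, hs, -⟩ := outcomeE_le_coe_iff.mp (h3 i)
      simp [hs]
    obtain ⟨i, hi⟩ := exists_outcome_eq_of_allPark ha hall j hj
    obtain ⟨s, hs, hsa⟩ := outcomeE_le_coe_iff.mp (h3 i)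
    exact ⟨i, hi, Option.some_inj.mp (hi.symm.trans hs) ▸ hsa⟩
  tfae_have 2 → 1 := fun h2 =>
    allPark_of_forall_exists_outcome_eq fun j hj => (h2 j hj).imp fun _ => And.left
  tfae_finish

/-- for `α ∈ [n]^n` complete, with all cars following the
`k`-Naples rule, the following are equivalent: (i) `α ∈ PF_{n,k}`;
(ii) every spot `j ∈ [n]` is occupied by a car with preference `≥ j`;
(iii) `ψ_k(c_j) ≤ a_j` for every car `c_j`. -/
theorem statement8 (n k : ℕ) (hn : 2 ≤ n) (hk : 1 ≤ k) (a : Fin n → ℕ)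
    (ha : ∀ i, a i ∈ Finset.Icc 1 n) (hcomp : Complete n a) :
    List.TFAE
      [NaplesPF n k a,
       ∀ j ∈ Finset.Icc 1 n, ∃ i : Fin n,
         outcome n n a (fun _ => k) i = some j ∧ j ≤ a i,
       ∀ i : Fin n, outcomeE n n a (fun _ => k) i ≤ (a i : ENat)] :=
  statement8_general n k a ha hcomp
end

section
/- Let n ≥ 2. The number of parking preferences α ∈ [n]^n that are complete, i.e. such that U_α = {2,…,n}, equals (n−1)^{n−1}. -/
open Finset

/-! Since `u_α(1) ≤ 0` always, `α` is complete iff `u_α(j) ≥ 1` for `2 ≤ j ≤ n`. The case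
`j = 2` forces `a_i ≥ 2`, and with `b_i = a_i - 2 ∈ ℤ/(n-1)` the remaining conditions say
`#{i | b_i < t} ≤ t` for `t < n - 1`. A cycle lemma counts these: of the `n - 1` translates
`b - s` of any `b ∈ (ℤ/(n-1))^n` exactly one satisfies the condition, namely the one with `s` the
first maximum on `[0, n-1)` of the excess walk `t ↦ #{(i, u) | u < t, b_i = u mod (n-1)} - t`,
which gains `n - (n - 1) = 1` per period. Hence there are `(n-1)^n / (n-1)` complete
preferences. -/

section Cycle

variable {f : ℕ → ℤ} {m : ℕ}

lemma forall_add_le_iff_of_add_period (hf : ∀ t, f (t + m) = f t + 1) {s : ℕ} (hs : s < m) :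
    (∀ t < m, f (s + t) ≤ f s) ↔ (∀ j < m, f j ≤ f s) ∧ ∀ j < s, f j < f s := by
  constructor
  · intro h
    have hlt : ∀ j < s, f j < f s := fun j hj => by
      have := h (j + m - s) (by omega)
      rw [show s + (j + m - s) = j + m by omega, hf] at this
      omega
    refine ⟨fun j hj => ?_, hlt⟩
    rcases lt_or_ge j s with hjs | hsj
    · exact (hlt j hjs).le
    · simpa [Nat.add_sub_cancel' hsj] using h (j - s) (by omega)
  · rintro ⟨hmax, hlt⟩ t ht
    rcases lt_or_ge (s + t) m with hst | hst
    · exact hmax _ hst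
    · have h1 := hf (s + t - m)
      rw [Nat.sub_add_cancel hst] at h1
      have := hlt (s + t - m) (by omega)
      omega

theorem existsUnique_peak_of_add_period (hm : 0 < m) (hf : ∀ t, f (t + m) = f t + 1) :
    ∃! s, s < m ∧ ∀ t < m, f (s + t) ≤ f s := by
  have hex : ∃ s, s < m ∧ ∀ j < m, f j ≤ f s := by
    obtain ⟨s, hs, hmax⟩ := exists_max_image (range m) f ⟨0, mem_range.2 hm⟩
    exact ⟨s, mem_range.1 hs, fun j hj => hmax j (mem_range.2 hj)⟩
  obtain ⟨hs, hmax⟩ := Nat.find_spec hex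
  refine ⟨Nat.find hex,
    ⟨hs, (forall_add_le_iff_of_add_period hf hs).2 ⟨hmax, fun j hj => ?_⟩⟩, ?_⟩
  · refine (hmax j (hj.trans hs)).lt_of_ne fun heq => Nat.find_min hex hj ⟨hj.trans hs, ?_⟩
    simpa only [heq] using hmax
  · rintro s ⟨hs', hpeak⟩
    rw [forall_add_le_iff_of_add_period hf hs'] at hpeak
    rcases (Nat.find_min' hex ⟨hs', hpeak.1⟩).lt_or_eq with h | h
    · exact absurd (hpeak.2 _ h) (not_lt.2 (hmax s hs'))
    · exact h.symm

end Cycle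

section CycleZMod

variable {ι : Type*} [Fintype ι] {m : ℕ}

def FewBelow (r : ι → ZMod m) : Prop :=
  ∀ t < m, #{i | (r i).val < t} ≤ t

instance (r : ι → ZMod m) : Decidable (FewBelow r) := by
  unfold FewBelow; infer_instance

def excess (r : ι → ZMod m) (t : ℕ) : ℤ :=
  ∑ u ∈ range t, (#{i | r i = u} : ℤ) - t

lemma excess_add (r : ι → ZMod m) (s t : ℕ) :
    excess r (s + t) =
      excess r s + ∑ v ∈ range t, (#{i | r i = ((s + v : ℕ) : ZMod m)} : ℤ) - t := by
  unfold excess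
  rw [sum_range_add]
  push_cast
  ring

variable [NeZero m]

lemma card_sub_val_lt (r : ι → ZMod m) (s : ℕ) {t : ℕ} (ht : t ≤ m) :
    #{i | (r i - s).val < t} = ∑ v ∈ range t, #{i | r i = ((s + v : ℕ) : ZMod m)} := by
  rw [card_eq_sum_card_fiberwise (f := fun i => (r i - s).val) (t := range t)
    fun i hi => mem_range.2 (mem_filter.1 hi).2]
  refine sum_congr rfl fun v hv => congrArg card (ext fun i => ?_)
  have hvm : v < m := (mem_range.1 hv).trans_le ht
  simp only [mem_filter, mem_univ, true_and, Nat.cast_add, ← sub_eq_iff_eq_add']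
  constructor
  · rintro ⟨-, h⟩
    rw [← h, ZMod.natCast_zmod_val]
  · intro h
    rw [h, ZMod.val_cast_of_lt hvm]
    exact ⟨mem_range.1 hv, rfl⟩

lemma excess_add_period (r : ι → ZMod m) (t : ℕ) :
    excess r (t + m) = excess r t + (Fintype.card ι - m) := by
  have hwindow := card_sub_val_lt r t le_rfl
  rw [filter_true_of_mem fun i _ => ZMod.val_lt _, card_univ] at hwindow
  rw [excess_add, ← Nat.cast_sum, ← hwindow]
  ring

lemma fewBelow_sub_iff (r : ι → ZMod m) (s : ℕ) :
    FewBelow (fun i => r i - (s : ZMod m)) ↔ ∀ t < m, excess r (s + t) ≤ excess r s := by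
  refine forall₂_congr fun t ht => ?_
  rw [card_sub_val_lt r s ht.le, excess_add, ← Nat.cast_sum]
  omega

theorem existsUnique_fewBelow_sub (hcard : Fintype.card ι = m + 1) (r : ι → ZMod m) :
    ∃! s : ZMod m, FewBelow (fun i => r i - s) := by
  obtain ⟨k, ⟨-, hpeak⟩, huniq⟩ :=
    existsUnique_peak_of_add_period (f := excess r) (Nat.pos_of_neZero m) fun t => by
      rw [excess_add_period, hcard]; push_cast; ring
  refine ⟨k, (fewBelow_sub_iff r k).2 hpeak, fun s hs => ?_⟩
  rw [← ZMod.natCast_zmod_val s] at hs ⊢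
  rw [huniq s.val ⟨ZMod.val_lt s, (fewBelow_sub_iff r _).1 hs⟩]

theorem card_fewBelow [DecidableEq ι] (hcard : Fintype.card ι = m + 1) :
    #{r : ι → ZMod m | FewBelow r} = m ^ m := by
  have hprod : #((univ.filter fun r : ι → ZMod m => FewBelow r) ×ˢ (univ : Finset (ZMod m)))
      = #(univ : Finset (ι → ZMod m)) := by
    refine card_nbij (fun p i => p.1 i + p.2) (fun _ _ => mem_univ _) ?_ ?_
    · rintro ⟨g, s⟩ hg ⟨g', s'⟩ hg' heq
      simp only [coe_product, Set.mem_prod, coe_filter, mem_univ, true_and, Set.mem_ofPred_eq,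
        coe_univ, Set.mem_univ, and_true] at hg hg'
      have heq' (i : ι) : g i + s = g' i + s' := congrFun heq i
      have hs : s = s' := (existsUnique_fewBelow_sub hcard fun i => g i + s).unique
        (by simpa using hg) (by simpa [heq'] using hg')
      subst hs
      ext i
      · simpa using heq' i
      · rfl
    · intro r _
      obtain ⟨s, hs, -⟩ := existsUnique_fewBelow_sub hcard r
      exact ⟨(fun i => r i - s, s), by simpa using hs, by simp⟩
  rw [card_product, card_univ, card_univ, ZMod.card, Fintype.card_fun, ZMod.card, hcard,
    pow_succ] at hprod
  exact Nat.eq_of_mul_eq_mul_right (Nat.pos_of_neZero m) hprod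

end CycleZMod

lemma complete_iff {n : ℕ} {a : Fin n → ℕ} :
    Complete n a ↔ ∀ j ∈ Icc 2 n, 1 ≤ ucount n a j := by
  have hone : ¬ 1 ≤ ucount n a 1 := by
    have := card_filter_le (univ : Finset (Fin n)) (fun i => 1 ≤ a i)
    rw [card_univ, Fintype.card_fin] at this
    unfold ucount
    omega
  unfold Complete Uset
  constructor
  · intro h j hj
    rw [← h] at hj
    exact (mem_filter.1 hj).2
  · intro h
    ext j
    simp only [mem_filter, mem_Icc]
    constructor
    · rintro ⟨⟨h1, hjn⟩, hu⟩
      refine ⟨?_, hjn⟩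
      by_contra h2
      obtain rfl : j = 1 := by omega
      exact hone hu
    · rintro ⟨h2, hjn⟩
      exact ⟨⟨by omega, hjn⟩, h j (mem_Icc.2 ⟨h2, hjn⟩)⟩

lemma two_le_of_complete {n : ℕ} {a : Fin n → ℕ} (hn : 2 ≤ n) (h : Complete n a) :
    ∀ i, 2 ≤ a i := by
  have h2 := complete_iff.1 h 2 (mem_Icc.2 ⟨le_rfl, hn⟩)
  have hle := card_filter_le (univ : Finset (Fin n)) (fun i => 2 ≤ a i)
  rw [card_univ, Fintype.card_fin] at hle
  unfold ucount at h2
  have hall : #{i | 2 ≤ a i} = #(univ : Finset (Fin n)) := by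
    rw [card_univ, Fintype.card_fin]
    omega
  exact fun i => card_filter_eq_iff.1 hall i (mem_univ i)

lemma ucount_val_add_two {m : ℕ} (b : Fin (m + 1) → ZMod m) (t : ℕ) :
    ucount (m + 1) (fun i => (b i).val + 2) (t + 2) = t + 1 - #{i | (b i).val < t} := by
  have hsplit := card_filter_add_card_filter_not (s := (univ : Finset (Fin (m + 1))))
    fun i => t + 2 ≤ (b i).val + 2
  simp only [card_univ, Fintype.card_fin, add_le_add_iff_right, not_le] at hsplit
  unfold ucount
  simp only [add_le_add_iff_right]
  omega

lemma complete_val_add_two_iff {m : ℕ} (b : Fin (m + 1) → ZMod m) :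
    Complete (m + 1) (fun i => (b i).val + 2) ↔ FewBelow b := by
  rw [complete_iff]
  constructor
  · intro h t ht
    have := h (t + 2) (mem_Icc.2 ⟨by omega, by omega⟩)
    rw [ucount_val_add_two] at this
    omega
  · intro h j hj
    have hj' := mem_Icc.1 hj
    obtain ⟨t, rfl⟩ : ∃ t, j = t + 2 := ⟨j - 2, by omega⟩
    have := h t (by omega)
    rw [ucount_val_add_two]
    omega

lemma val_natCast_sub_two_add_two {m : ℕ} {a : Fin (m + 1) → ℕ} (hlo : ∀ i, 2 ≤ a i)
    (hhi : ∀ i, a i ≤ m + 1) : (fun i => ((a i - 2 : ℕ) : ZMod m).val + 2) = a := by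
  funext i
  rw [ZMod.val_cast_of_lt (by grind)]
  grind

/-- for `n ≥ 2`, the number of complete parking preferences in
`[n]^n` is `(n−1)^{n−1}`. -/
theorem statement15 (n : ℕ) (hn : 2 ≤ n) :
    ((Fintype.piFinset fun _ : Fin n => Finset.Icc 1 n).filter
        (fun a => Complete n a)).card = (n - 1) ^ (n - 1) := by
  obtain ⟨m, rfl⟩ : ∃ m, n = m + 1 := ⟨n - 1, by omega⟩
  have : NeZero m := ⟨by omega⟩
  have hround (a : Fin (m + 1) → ℕ)
      (ha : a ∈ (Fintype.piFinset fun _ => Icc 1 (m + 1)).filter (Complete (m + 1))) :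
      (fun i => ((a i - 2 : ℕ) : ZMod m).val + 2) = a := by
    rw [mem_filter, Fintype.mem_piFinset] at ha
    exact val_natCast_sub_two_add_two (two_le_of_complete hn ha.2) fun i => (mem_Icc.1 (ha.1 i)).2
  rw [Nat.add_sub_cancel, ← card_fewBelow (ι := Fin (m + 1)) (Fintype.card_fin _)]
  refine card_nbij' (fun a i => ((a i - 2 : ℕ) : ZMod m)) (fun b i => (b i).val + 2)
    (fun a ha => ?_) (fun b hb => ?_) hround (fun b _ => ?_)
  · have hc := (mem_filter.1 ha).2
    rw [← hround a ha, complete_val_add_two_iff] at hc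
    simpa using hc
  · simp only [coe_filter, mem_univ, true_and, Set.mem_ofPred_eq, Fintype.mem_piFinset,
      mem_Icc] at hb ⊢
    refine ⟨fun i => ⟨by omega, ?_⟩, (complete_val_add_two_iff b).2 hb⟩
    have := ZMod.val_lt (b i)
    omega
  · funext i
    simp
end
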